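/- arXiv:math/0004042 — 5 statements merged into one kernel-verified Lean document; each statement's English description precedes it below -/
import Mathlib

section
/- The product Lie algebra g × h decomposes as the direct sum of vector subspaces g × h = η₊(b₊) ⊕ η₋(b₋); that is, every element (x, a) ∈ g × h can be written uniquely as η₊(u) + η₋(v) with u ∈ b₊, v ∈ b₋. -/
/-!
Write `u = c + u₊` and `v = d + v₋` with `c, d ∈ h`, `u₊ ∈ n₊`, `v₋ ∈ n₋`. Then
`η₊(u) + η₋(v) = (v₋ + (c + d) + u₊, c - d)`, so by the triangular decomposition of `x`
the pair `(u, v)` is pinned down by `v₋`, `u₊` and the pair `(c + d, c - d)`; since `2` is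
invertible, `(c, d) ↦ (c + d, c - d)` is a bijection of `h × h`.
-/

theorem add_eq_and_sub_eq_iff {k M : Type*} [Field k] [AddCommGroup M] [Module k M]
    (h2 : (2 : k) ≠ 0) {a b c d : M} :
    c + d = b ∧ c - d = a ↔ c = (2 : k)⁻¹ • (b + a) ∧ d = (2 : k)⁻¹ • (b - a) := by
  constructor
  · rintro ⟨rfl, rfl⟩
    constructor <;> match_scalars <;> field_simp <;> ring
  · rintro ⟨rfl, rfl⟩
    constructor <;> match_scalars <;> field_simp <;> ring

theorem eq_of_add_add_eq_add_add {M : Type*} [AddCommGroup M] {Nm H Np : AddSubgroup M}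
    (huniq : ∀ v ∈ Nm, ∀ a ∈ H, ∀ u ∈ Np, v + a + u = 0 → v = 0 ∧ a = 0 ∧ u = 0)
    {v v' a a' u u' : M} (hv : v ∈ Nm) (hv' : v' ∈ Nm) (ha : a ∈ H) (ha' : a' ∈ H)
    (hu : u ∈ Np) (hu' : u' ∈ Np) (h : v + a + u = v' + a' + u') :
    v = v' ∧ a = a' ∧ u = u' := by
  have hzero : (v - v') + (a - a') + (u - u') = 0 := by
    rw [← sub_eq_zero.2 h]; abel
  obtain ⟨hv0, ha0, hu0⟩ :=
    huniq _ (Nm.sub_mem hv hv') _ (H.sub_mem ha ha') _ (Np.sub_mem hu hu') hzero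
  exact ⟨sub_eq_zero.1 hv0, sub_eq_zero.1 ha0, sub_eq_zero.1 hu0⟩

theorem mk_proj_add_mk_neg_proj_eq {k M : Type*} [Field k] [AddCommGroup M] [Module k M]
    {H Np Nm : Submodule k M} {πp πm : M →ₗ[k] M}
    (hπp : ∀ a ∈ H, ∀ u ∈ Np, πp (a + u) = a) (hπm : ∀ a ∈ H, ∀ v ∈ Nm, πm (a + v) = a)
    {c d u v : M} (hc : c ∈ H) (hd : d ∈ H) (hu : u ∈ Np) (hv : v ∈ Nm) :
    (c + u, πp (c + u)) + (d + v, -πm (d + v)) = (v + (c + d) + u, c - d) := by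
  rw [hπp c hc u hu, hπm d hd v hv, Prod.mk_add_mk, sub_eq_add_neg]
  congr 1
  abel

theorem statement1_general
    {k : Type*} [Field k] [CharZero k]
    {L : Type*} [LieRing L] [LieAlgebra k L]
    (H np nm : LieSubalgebra k L)
    (hspan : ∀ x : L, ∃ v ∈ nm, ∃ a ∈ H, ∃ u ∈ np, x = v + a + u)
    (huniq : ∀ v ∈ nm, ∀ a ∈ H, ∀ u ∈ np, v + a + u = 0 → v = 0 ∧ a = 0 ∧ u = 0)
    (πp πm : L →ₗ[k] L)
    (hπp : ∀ a ∈ H, ∀ u ∈ np, πp (a + u) = a)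
    (hπm : ∀ a ∈ H, ∀ v ∈ nm, πm (a + v) = a) :
    ∀ x : L, ∀ a ∈ H, ∃! p : L × L,
      p.1 ∈ H.toSubmodule ⊔ np.toSubmodule ∧
      p.2 ∈ H.toSubmodule ⊔ nm.toSubmodule ∧
      ((x, a) : L × L) = (p.1, πp p.1) + (p.2, -πm p.2) := by
  intro x a ha
  obtain ⟨v, hv, b, hb, u, hu, rfl⟩ := hspan x
  have h2 : (2 : k) ≠ 0 := two_ne_zero
  set c : L := (2 : k)⁻¹ • (b + a)
  set d : L := (2 : k)⁻¹ • (b - a)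
  obtain ⟨hcd, hc_d⟩ := (add_eq_and_sub_eq_iff (c := c) (d := d) h2).2 ⟨rfl, rfl⟩
  have hc : c ∈ H := H.smul_mem _ (H.add_mem hb ha)
  have hd : d ∈ H := H.smul_mem _ (H.sub_mem hb ha)
  refine ⟨(c + u, d + v), ⟨Submodule.add_mem_sup hc hu, Submodule.add_mem_sup hd hv, ?_⟩, ?_⟩
  · rw [mk_proj_add_mk_neg_proj_eq (H := H.toSubmodule) hπp hπm hc hd hu hv, hcd, hc_d]
  rintro ⟨p₁, p₂⟩ ⟨hp₁, hp₂, hp⟩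
  obtain ⟨c', hc', u', hu', rfl⟩ := Submodule.mem_sup.1 hp₁
  obtain ⟨d', hd', v', hv', rfl⟩ := Submodule.mem_sup.1 hp₂
  rw [mk_proj_add_mk_neg_proj_eq (H := H.toSubmodule) hπp hπm hc' hd' hu' hv', Prod.mk.injEq] at hp
  obtain ⟨rfl, hb', rfl⟩ := eq_of_add_add_eq_add_add (Nm := nm.toSubmodule.toAddSubgroup)
    (H := H.toSubmodule.toAddSubgroup) (Np := np.toSubmodule.toAddSubgroup)
    huniq hv hv' hb (H.add_mem hc' hd') hu hu' hp.1
  obtain ⟨rfl, rfl⟩ := (add_eq_and_sub_eq_iff h2).1 ⟨hb'.symm, hp.2.symm⟩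
  rfl

theorem statement1
    {k : Type*} [Field k] [CharZero k]
    {L : Type*} [LieRing L] [LieAlgebra k L]
    (H np nm : LieSubalgebra k L)
    (habel : ∀ a ∈ H, ∀ b ∈ H, ⁅a, b⁆ = (0 : L))
    (hnp : ∀ a ∈ H, ∀ u ∈ np, ⁅a, u⁆ ∈ np)
    (hnm : ∀ a ∈ H, ∀ v ∈ nm, ⁅a, v⁆ ∈ nm)
    (hspan : ∀ x : L, ∃ v ∈ nm, ∃ a ∈ H, ∃ u ∈ np, x = v + a + u)
    (huniq : ∀ v ∈ nm, ∀ a ∈ H, ∀ u ∈ np, v + a + u = 0 → v = 0 ∧ a = 0 ∧ u = 0)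
    (πp πm : L →ₗ[k] L)
    (hπp : ∀ a ∈ H, ∀ u ∈ np, πp (a + u) = a)
    (hπm : ∀ a ∈ H, ∀ v ∈ nm, πm (a + v) = a) :
    ∀ x : L, ∀ a ∈ H, ∃! p : L × L,
      p.1 ∈ H.toSubmodule ⊔ np.toSubmodule ∧
      p.2 ∈ H.toSubmodule ⊔ nm.toSubmodule ∧
      ((x, a) : L × L) = (p.1, πp p.1) + (p.2, -πm p.2) :=
  statement1_general H np nm hspan huniq πp πm hπp hπm
end

section
/- (Proposition 2.1.) The triple (g × h, η₊(b₊), η₋(b₋)) with the bilinear form B̃ is a Manin triple: B̃ is a symmetric, invariant (B̃([u,v],w) = B̃(u,[v,w])), nondegenerate bilinear form on the Lie algebra g × h; η₊(b₊) and η₋(b₋) are Lie subalgebras of g × h which are isotropic with respect to B̃; and g × h = η₊(b₊) ⊕ η₋(b₋) as k-vector spaces. -/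
/- STATEMENT 4 (Proposition 2.1): `(g × H, η₊(b₊), η₋(b₋))` with the form
`B̃((x,a),(y,b)) = B(x,y) - B(a,b)` is a Manin triple.  Elements of the
product Lie algebra `g × H` (with `H` abelian) are pairs `(x, a)` with
`a ∈ H`, and the bracket is componentwise:
`⁅(x,a),(y,b)⁆ = (⁅x,y⁆, ⁅a,b⁆)` (the second bracket vanishing since `H` is
abelian).  The conclusions: `B̃` is symmetric, invariant and nondegenerate;
the images `η₊(b₊)`, `η₋(b₋)` of `b₊ = H ⊕ n₊`, `b₋ = H ⊕ n₋` under
`η₊ x = (x, πp x)`, `η₋ x = (x, -πm x)` are Lie subalgebras of `g × H`,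
isotropic for `B̃`; and `g × H = η₊(b₊) ⊕ η₋(b₋)` as vector spaces. -/
theorem statement4
    {k : Type*} [Field k] [CharZero k]
    {L : Type*} [LieRing L] [LieAlgebra k L]
    (H np nm : LieSubalgebra k L)
    (habel : ∀ a ∈ H, ∀ b ∈ H, ⁅a, b⁆ = (0 : L))
    (hnp : ∀ a ∈ H, ∀ u ∈ np, ⁅a, u⁆ ∈ np)
    (hnm : ∀ a ∈ H, ∀ v ∈ nm, ⁅a, v⁆ ∈ nm)
    (hspan : ∀ x : L, ∃ v ∈ nm, ∃ a ∈ H, ∃ u ∈ np, x = v + a + u)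
    (huniq : ∀ v ∈ nm, ∀ a ∈ H, ∀ u ∈ np, v + a + u = 0 → v = 0 ∧ a = 0 ∧ u = 0)
    (πp πm : L →ₗ[k] L)
    (hπp : ∀ a ∈ H, ∀ u ∈ np, πp (a + u) = a)
    (hπm : ∀ a ∈ H, ∀ v ∈ nm, πm (a + v) = a)
    (B : L →ₗ[k] L →ₗ[k] k)
    (hBsymm : ∀ x y : L, B x y = B y x)
    (hBnondeg : ∀ x : L, (∀ y : L, B x y = 0) → x = 0)
    (hBinv : ∀ x y z : L, B ⁅x, y⁆ z = B x ⁅y, z⁆)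
    (hBpp : ∀ u ∈ np, ∀ u' ∈ np, B u u' = 0)
    (hBmm : ∀ v ∈ nm, ∀ v' ∈ nm, B v v' = 0)
    (hBhp : ∀ a ∈ H, ∀ u ∈ np, B a u = 0)
    (hBhm : ∀ a ∈ H, ∀ v ∈ nm, B a v = 0) :
    -- B̃ is symmetric on g × H
    (∀ x y : L, ∀ a ∈ H, ∀ b ∈ H, B x y - B a b = B y x - B b a) ∧
    -- B̃ is invariant: B̃(⁅u,v⁆, w) = B̃(u, ⁅v,w⁆) on g × H
    (∀ x y z : L, ∀ a ∈ H, ∀ b ∈ H, ∀ c ∈ H,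
        B ⁅x, y⁆ z - B ⁅a, b⁆ c = B x ⁅y, z⁆ - B a ⁅b, c⁆) ∧
    -- B̃ is nondegenerate on g × H
    (∀ x : L, ∀ a ∈ H, (∀ y : L, ∀ b ∈ H, B x y - B a b = 0) → x = 0 ∧ a = 0) ∧
    -- η₊(b₊) is a Lie subalgebra of g × H
    (∀ x ∈ H.toSubmodule ⊔ np.toSubmodule, ∀ y ∈ H.toSubmodule ⊔ np.toSubmodule,
        ∃ z ∈ H.toSubmodule ⊔ np.toSubmodule,
          ((⁅x, y⁆, ⁅πp x, πp y⁆) : L × L) = (z, πp z)) ∧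
    -- η₋(b₋) is a Lie subalgebra of g × H
    (∀ x ∈ H.toSubmodule ⊔ nm.toSubmodule, ∀ y ∈ H.toSubmodule ⊔ nm.toSubmodule,
        ∃ z ∈ H.toSubmodule ⊔ nm.toSubmodule,
          ((⁅x, y⁆, ⁅-πm x, -πm y⁆) : L × L) = (z, -πm z)) ∧
    -- η₊(b₊) is isotropic for B̃
    (∀ x ∈ H.toSubmodule ⊔ np.toSubmodule, ∀ y ∈ H.toSubmodule ⊔ np.toSubmodule,
        B x y - B (πp x) (πp y) = 0) ∧
    -- η₋(b₋) is isotropic for B̃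
    (∀ x ∈ H.toSubmodule ⊔ nm.toSubmodule, ∀ y ∈ H.toSubmodule ⊔ nm.toSubmodule,
        B x y - B (-πm x) (-πm y) = 0) ∧
    -- g × H = η₊(b₊) ⊕ η₋(b₋) as vector spaces
    (∀ x : L, ∀ a ∈ H, ∃! p : L × L,
        p.1 ∈ H.toSubmodule ⊔ np.toSubmodule ∧
        p.2 ∈ H.toSubmodule ⊔ nm.toSubmodule ∧
        ((x, a) : L × L) = (p.1, πp p.1) + (p.2, -πm p.2)) := by
  have memsup : ∀ (N : LieSubalgebra k L) (x : L),
      x ∈ H.toSubmodule ⊔ N.toSubmodule ↔ ∃ a ∈ H, ∃ u ∈ N, x = a + u := by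
    intro N x
    rw [Submodule.mem_sup]
    constructor
    · rintro ⟨a, ha, u, hu, rfl⟩; exact ⟨a, ha, u, hu, rfl⟩
    · rintro ⟨a, ha, u, hu, rfl⟩; exact ⟨a, ha, u, hu, rfl⟩
  have two_ne : (2 : k) ≠ 0 := two_ne_zero
  refine ⟨?_, ?_, ?_, ?_, ?_, ?_, ?_, ?_⟩
  · intro x y a _ b _
    rw [hBsymm x y, hBsymm a b]
  · intro x y z a ha b hb c hc
    rw [habel a ha b hb, habel b hb c hc, hBinv x y z]
    simp
  · intro x a ha hall
    have hx0 : x = 0 := by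
      apply hBnondeg
      intro y
      have := hall y 0 H.zero_mem
      simpa using this
    refine ⟨hx0, ?_⟩
    apply hBnondeg
    intro y
    obtain ⟨v, hv, h, hh, u, hu, rfl⟩ := hspan y
    have h1 : B a v = 0 := hBhm a ha v hv
    have h2 : B a h = 0 := by
      have := hall 0 h hh
      simpa using this
    have h3 : B a u = 0 := hBhp a ha u hu
    simp [h1, h2, h3]
  · intro x hx y hy
    rw [memsup] at hx hy
    obtain ⟨a, ha, u, hu, rfl⟩ := hx
    obtain ⟨b, hb, u', hu', rfl⟩ := hy
    have hz : ⁅a + u, b + u'⁆ ∈ np := by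
      have e : ⁅a + u, b + u'⁆ = ⁅a, b⁆ + ⁅a, u'⁆ + (⁅u, b⁆ + ⁅u, u'⁆) := by
        rw [lie_add, add_lie, add_lie]; abel
      rw [e, habel a ha b hb, zero_add]
      refine np.add_mem (hnp a ha u' hu') (np.add_mem ?_ (np.lie_mem hu hu'))
      rw [← lie_skew]
      exact np.neg_mem (hnp b hb u hu)
    refine ⟨⁅a + u, b + u'⁆, Submodule.mem_sup_right hz, ?_⟩
    have hπz : πp ⁅a + u, b + u'⁆ = 0 := by
      have := hπp 0 H.zero_mem _ hz
      rwa [zero_add] at this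
    rw [hπp a ha u hu, hπp b hb u' hu', habel a ha b hb, hπz]
  · intro x hx y hy
    rw [memsup] at hx hy
    obtain ⟨a, ha, v, hv, rfl⟩ := hx
    obtain ⟨b, hb, v', hv', rfl⟩ := hy
    have hz : ⁅a + v, b + v'⁆ ∈ nm := by
      have e : ⁅a + v, b + v'⁆ = ⁅a, b⁆ + ⁅a, v'⁆ + (⁅v, b⁆ + ⁅v, v'⁆) := by
        rw [lie_add, add_lie, add_lie]; abel
      rw [e, habel a ha b hb, zero_add]
      refine nm.add_mem (hnm a ha v' hv') (nm.add_mem ?_ (nm.lie_mem hv hv'))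
      rw [← lie_skew]
      exact nm.neg_mem (hnm b hb v hv)
    refine ⟨⁅a + v, b + v'⁆, Submodule.mem_sup_right hz, ?_⟩
    have hπz : πm ⁅a + v, b + v'⁆ = 0 := by
      have := hπm 0 H.zero_mem _ hz
      rwa [zero_add] at this
    rw [hπm a ha v hv, hπm b hb v' hv', hπz]
    simp [habel a ha b hb]
  · intro x hx y hy
    rw [memsup] at hx hy
    obtain ⟨a, ha, u, hu, rfl⟩ := hx
    obtain ⟨b, hb, u', hu', rfl⟩ := hy
    rw [hπp a ha u hu, hπp b hb u' hu']
    have h1 : B a u' = 0 := hBhp a ha u' hu'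
    have h2 : B u b = 0 := by rw [hBsymm]; exact hBhp b hb u hu
    have h3 : B u u' = 0 := hBpp u hu u' hu'
    simp [h1, h2, h3]
  · intro x hx y hy
    rw [memsup] at hx hy
    obtain ⟨a, ha, v, hv, rfl⟩ := hx
    obtain ⟨b, hb, v', hv', rfl⟩ := hy
    rw [hπm a ha v hv, hπm b hb v' hv']
    have h1 : B a v' = 0 := hBhm a ha v' hv'
    have h2 : B v b = 0 := by rw [hBsymm]; exact hBhm b hb v hv
    have h3 : B v v' = 0 := hBmm v hv v' hv'
    simp [h1, h2, h3]
  · intro x a ha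
    obtain ⟨v, hv, h, hh, u, hu, rfl⟩ := hspan x
    set b : L := (2 : k)⁻¹ • (h + a) with hbdef
    set c : L := (2 : k)⁻¹ • (h - a) with hcdef
    have hb : b ∈ H := H.smul_mem _ (H.add_mem hh ha)
    have hc : c ∈ H := H.smul_mem _ (H.sub_mem hh ha)
    have hbc : b + c = h := by
      rw [hbdef, hcdef, ← smul_add]
      have e : (h + a) + (h - a) = (2 : k) • h := by rw [two_smul]; abel
      rw [e, smul_smul, inv_mul_cancel₀ two_ne, one_smul]
    have hbc' : b - c = a := by
      rw [hbdef, hcdef, ← smul_sub]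
      have e : (h + a) - (h - a) = (2 : k) • a := by rw [two_smul]; abel
      rw [e, smul_smul, inv_mul_cancel₀ two_ne, one_smul]
    refine ⟨(b + u, c + v), ⟨?_, ?_, ?_⟩, ?_⟩
    · exact (memsup np _).2 ⟨b, hb, u, hu, rfl⟩
    · exact (memsup nm _).2 ⟨c, hc, v, hv, rfl⟩
    · rw [hπp b hb u hu, hπm c hc v hv, Prod.mk_add_mk]
      refine Prod.ext ?_ ?_
      · show v + h + u = (b + u) + (c + v)
        rw [← hbc]; abel
      · show a = b + -c
        rw [← hbc']; abel
    · rintro ⟨q1, q2⟩ ⟨hq1, hq2, hq3⟩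
      rw [memsup] at hq1 hq2
      obtain ⟨b', hb', u', hu', hq1e⟩ := hq1
      obtain ⟨c', hc', v'', hv'', hq2e⟩ := hq2
      rw [Prod.mk_add_mk, Prod.ext_iff] at hq3
      obtain ⟨eq1, eq2⟩ := hq3
      dsimp only at eq1 eq2 hq1e hq2e
      have hπ1 : πp q1 = b' := by rw [hq1e]; exact hπp b' hb' u' hu'
      have hπ2 : πm q2 = c' := by rw [hq2e]; exact hπm c' hc' v'' hv''
      have hdiff : a = b' - c' := by
        rw [hπ1, hπ2] at eq2
        rw [eq2]; abel
      have key : (v'' - v) + ((b' + c') - h) + (u' - u) = 0 := by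
        have : v + h + u = (b' + u') + (c' + v'') := by
          rw [← hq1e, ← hq2e]; exact eq1
        rw [eq_comm, ← sub_eq_zero] at this
        rw [← this]; abel
      obtain ⟨e1, e2, e3⟩ := huniq _ (nm.sub_mem hv'' hv) _
        (H.sub_mem (H.add_mem hb' hc') hh) _ (np.sub_mem hu' hu) key
      have hv2 : v'' = v := by rwa [sub_eq_zero] at e1
      have hu2 : u' = u := by rwa [sub_eq_zero] at e3
      have hsum : b' + c' = h := by rwa [sub_eq_zero] at e2
      have hb2 : b' = b := by
        have h2b : (2 : k) • b' = h + a := by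
          rw [two_smul, ← hsum, hdiff]; abel
        rw [hbdef, ← h2b, smul_smul, inv_mul_cancel₀ two_ne, one_smul]
      have hc2 : c' = c := by
        have h2c : (2 : k) • c' = h - a := by
          rw [two_smul, ← hsum, hdiff]; abel
        rw [hcdef, ← h2c, smul_smul, inv_mul_cancel₀ two_ne, one_smul]
      rw [Prod.ext_iff]
      exact ⟨by rw [hq1e, hb2, hu2], by rw [hq2e, hc2, hv2]⟩
end

section
/- Suppose functions ψ₁, ψ₂ : V × V → W satisfy, for all x, y, z ∈ V: (3.4) ψ₁(x,y) + ψ₁(x+y,z) = ψ₁(x,y+z); (3.5) ψ₂(y,z) + ψ₂(x,y+z) = ψ₂(x+y,z); and (3.6) ψ₁(y,z) + ψ₂(x,y+z) = ψ₁(x+y,z) + ψ₂(x,y). Define φ₁(x) = ψ₁(x,−x), φ₂(x) = ψ₂(−x,x), and γ = φ₁ − φ₂. Then γ satisfies γ(y) − γ(x+y) − γ(y+z) + γ(x+y+z) = 0 for all x, y, z ∈ V. -/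
/- STATEMENT 8: If `ψ₁, ψ₂ : V × V → W` satisfy (3.4), (3.5), (3.6), and
`φ₁(x) = ψ₁(x,-x)`, `φ₂(x) = ψ₂(-x,x)`, `γ = φ₁ - φ₂`, then
`γ(y) - γ(x+y) - γ(y+z) + γ(x+y+z) = 0` for all `x, y, z`. -/
theorem statement8
    {V W : Type*} [AddCommGroup V] [Module ℚ V] [AddCommGroup W] [Module ℚ W]
    (ψ₁ ψ₂ : V → V → W)
    (h34 : ∀ x y z : V, ψ₁ x y + ψ₁ (x + y) z = ψ₁ x (y + z))
    (h35 : ∀ x y z : V, ψ₂ y z + ψ₂ x (y + z) = ψ₂ (x + y) z)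
    (h36 : ∀ x y z : V, ψ₁ y z + ψ₂ x (y + z) = ψ₁ (x + y) z + ψ₂ x y)
    (φ₁ φ₂ γ : V → W)
    (hφ₁ : ∀ x : V, φ₁ x = ψ₁ x (-x))
    (hφ₂ : ∀ x : V, φ₂ x = ψ₂ (-x) x)
    (hγ : ∀ x : V, γ x = φ₁ x - φ₂ x) :
    ∀ x y z : V, γ y - γ (x + y) - γ (y + z) + γ (x + y + z) = 0 := by
  have k1 : ∀ a b : V, ψ₁ (a + b) (-(a + b)) = ψ₁ a (-a) - ψ₁ a b := by
    intro a b
    have h := h34 a b (-(a + b))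
    rw [show b + -(a + b) = -a by abel] at h
    exact eq_sub_of_add_eq' h
  have k2 : ∀ a b : V, ψ₂ (-(a + b)) (a + b) = ψ₂ (-b) b - ψ₂ a b := by
    intro a b
    have h := h35 (-(a + b)) a b
    rw [show -(a + b) + a = -b by abel] at h
    exact eq_sub_of_add_eq' h
  intro x y z
  have e1 := h34 x y z
  have e2 : ψ₂ x (y + z) = ψ₁ (x + y) z + ψ₂ x y - ψ₁ y z := by
    have := h36 x y z
    rw [← this]; abel
  simp only [hγ, hφ₁, hφ₂]
  rw [show x + y + z = x + (y + z) from add_assoc x y z,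
      k1 x y, k2 x y, k1 y z, k2 y z, k1 x (y + z), k2 x (y + z), k2 y z,
      ← e1, e2]
  abel
end

section
/- Suppose functions ψ₁, ψ₂ : V × V → W satisfy, for all x, y, z ∈ V: (3.4) ψ₁(x,y) + ψ₁(x+y,z) = ψ₁(x,y+z); (3.5) ψ₂(y,z) + ψ₂(x,y+z) = ψ₂(x+y,z); and (3.6) ψ₁(y,z) + ψ₂(x,y+z) = ψ₁(x+y,z) + ψ₂(x,y). Define φ₁(x) = ψ₁(x,−x) and φ₂(x) = ψ₂(−x,x). Then: (a) ψ₁(x,y) = φ₁(x) − φ₁(x+y) for all x, y; (b) ψ₂(x,y) = φ₂(y) − φ₂(x+y) for all x, y; and (c) there exist a ℚ-linear map ℓ : V → W and a constant c ∈ W such that φ₁(x) − φ₂(x) = ℓ(x) + c for all x ∈ V; moreover c = ψ₁(0,0) − ψ₂(0,0), so if ψ₁(0,0) = ψ₂(0,0) then φ₁ − φ₂ is ℚ-linear. -/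
/- STATEMENT 10: If `ψ₁, ψ₂ : V × V → W` satisfy (3.4), (3.5), (3.6) and
`φ₁(x) = ψ₁(x,-x)`, `φ₂(x) = ψ₂(-x,x)`, then
(a) `ψ₁(x,y) = φ₁(x) - φ₁(x+y)`;
(b) `ψ₂(x,y) = φ₂(y) - φ₂(x+y)`;
(c) `φ₁ - φ₂ = ℓ + c` with `ℓ : V → W` ℚ-linear and constant
    `c = ψ₁(0,0) - ψ₂(0,0)`; in particular if `ψ₁(0,0) = ψ₂(0,0)` then
    `φ₁ - φ₂` is ℚ-linear. -/
theorem statement10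
    {V W : Type*} [AddCommGroup V] [Module ℚ V] [AddCommGroup W] [Module ℚ W]
    (ψ₁ ψ₂ : V → V → W)
    (h34 : ∀ x y z : V, ψ₁ x y + ψ₁ (x + y) z = ψ₁ x (y + z))
    (h35 : ∀ x y z : V, ψ₂ y z + ψ₂ x (y + z) = ψ₂ (x + y) z)
    (h36 : ∀ x y z : V, ψ₁ y z + ψ₂ x (y + z) = ψ₁ (x + y) z + ψ₂ x y)
    (φ₁ φ₂ : V → W)
    (hφ₁ : ∀ x : V, φ₁ x = ψ₁ x (-x))
    (hφ₂ : ∀ x : V, φ₂ x = ψ₂ (-x) x) :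
    (∀ x y : V, ψ₁ x y = φ₁ x - φ₁ (x + y)) ∧
    (∀ x y : V, ψ₂ x y = φ₂ y - φ₂ (x + y)) ∧
    (∃ ℓ : V →ₗ[ℚ] W, ∀ x : V, φ₁ x - φ₂ x = ℓ x + (ψ₁ 0 0 - ψ₂ 0 0)) ∧
    (ψ₁ 0 0 = ψ₂ 0 0 → ∃ ℓ : V →ₗ[ℚ] W, ∀ x : V, φ₁ x - φ₂ x = ℓ x) := by
  have ha : ∀ x y : V, ψ₁ x y = φ₁ x - φ₁ (x + y) := by
    intro x y
    have h := h34 x y (-(x + y))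
    rw [show y + -(x + y) = -x by abel] at h
    rw [hφ₁ x, hφ₁ (x + y)]
    exact eq_sub_of_add_eq h
  have hb : ∀ x y : V, ψ₂ x y = φ₂ y - φ₂ (x + y) := by
    intro x y
    have h := h35 (-(x + y)) x y
    rw [show -(x + y) + x = -y by abel] at h
    rw [hφ₂ y, hφ₂ (x + y)]
    exact eq_sub_of_add_eq h
  have key : ∀ x z : V,
      (φ₁ (x + z) - φ₂ (x + z)) + (φ₁ 0 - φ₂ 0)
        = (φ₁ x - φ₂ x) + (φ₁ z - φ₂ z) := by
    intro x z
    have h := h36 x 0 z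
    rw [ha, ha, hb, hb, zero_add, add_zero] at h
    rw [← sub_eq_zero] at h ⊢
    rw [show (φ₁ (x + z) - φ₂ (x + z)) + (φ₁ 0 - φ₂ 0)
          - ((φ₁ x - φ₂ x) + (φ₁ z - φ₂ z))
        = φ₁ 0 - φ₁ z + (φ₂ z - φ₂ (x + z))
          - (φ₁ x - φ₁ (x + z) + (φ₂ 0 - φ₂ x)) by abel]
    exact h
  have hc0 : φ₁ 0 - φ₂ 0 = ψ₁ 0 0 - ψ₂ 0 0 := by
    rw [hφ₁, hφ₂, neg_zero]
  set c : W := φ₁ 0 - φ₂ 0 with hc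
  have gadd : ∀ a b : V,
      ((φ₁ (a + b) - φ₂ (a + b)) - c)
        = ((φ₁ a - φ₂ a) - c) + ((φ₁ b - φ₂ b) - c) := by
    intro a b
    have h := key a b
    rw [← sub_eq_zero] at h ⊢
    rw [show ((φ₁ (a + b) - φ₂ (a + b)) - c)
          - (((φ₁ a - φ₂ a) - c) + ((φ₁ b - φ₂ b) - c))
        = (φ₁ (a + b) - φ₂ (a + b)) + (φ₁ 0 - φ₂ 0)
          - ((φ₁ a - φ₂ a) + (φ₁ b - φ₂ b)) by rw [hc]; abel]
    exact h
  let g : V →+ W := AddMonoidHom.mk' (fun x => (φ₁ x - φ₂ x) - c) gadd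
  let ℓ : V →ₗ[ℚ] W := g.toRatLinearMap
  have hℓ : ∀ x : V, φ₁ x - φ₂ x = ℓ x + (ψ₁ 0 0 - ψ₂ 0 0) := by
    intro x
    show φ₁ x - φ₂ x = ((φ₁ x - φ₂ x) - c) + (ψ₁ 0 0 - ψ₂ 0 0)
    rw [← hc0]; abel
  refine ⟨ha, hb, ⟨ℓ, hℓ⟩, fun h0 => ⟨ℓ, fun x => ?_⟩⟩
  have := hℓ x
  rw [h0, sub_self, add_zero] at this
  exact this
end

section
/- Let (h, (α_i), (h_i)) be a realization of a symmetrizable matrix A with symmetrizer (d_i). Then there exists a nondegenerate symmetric bilinear form (·,·) on h such that (x, h_i) = d_i⁻¹ · α_i(x) for all x ∈ h and all i = 1, …, n. -/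
/-! Extend the coordinate functionals of the basis `(h_i)` of `span (h_i)` to functionals `c_i`
on `h` and take Kac's form built from the `c_i`, the `d_i⁻¹ α_i` and `A`; symmetry is the
symmetrizability of `A`. A vector `x` orthogonal to everything is killed by every `α_i`, and the
common kernel of the `α_i` lies in `span (h_i)` because it has dimension `dim h - n = n - rank A`,
the dimension of its intersection with `span (h_i)`. For such `x` the form reduces to
`(x, y) = ∑ d_i⁻¹ c_i(x) α_i(y)`, so the linear independence of the `α_i` forces `x = 0`. -/

open Module Finset Submodule

section

variable {k : Type*} [Field k] {H : Type*} [AddCommGroup H] [Module k H] {ι : Type*}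

theorem LinearIndependent.exists_biorthogonal [DecidableEq ι] {v : ι → H}
    (hv : LinearIndependent k v) :
    ∃ c : ι → Dual k H, ∀ i j, c i (v j) = if i = j then 1 else 0 := by
  choose c hc using fun i => ((Basis.span hv).coord i).exists_extend
  refine ⟨c, fun i j => ?_⟩
  have := LinearMap.congr_fun (hc i) ⟨v j, subset_span ⟨j, rfl⟩⟩
  simp only [LinearMap.comp_apply, Submodule.subtype_apply] at this
  rw [this, ← Basis.span_apply hv j, Basis.coord_apply, Basis.repr_self]
  simp only [Finsupp.single_apply, eq_comm]

theorem inv_mul_comm_of_symmetrizer {A : Matrix ι ι k} {d : ι → k} (hd : ∀ i, d i ≠ 0)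
    (hsym : ∀ i j, d i * A i j = d j * A j i) (i j : ι) :
    (d j)⁻¹ * A i j = (d i)⁻¹ * A j i := by
  field_simp [hd i, hd j]
  linear_combination hsym i j

variable [Fintype ι]

theorem eq_sum_of_mem_span_of_biorthogonal [DecidableEq ι] {v : ι → H} {c : ι → Dual k H}
    (hc : ∀ i j, c i (v j) = if i = j then 1 else 0) {x : H} (hx : x ∈ span k (Set.range v)) :
    x = ∑ i, c i x • v i := by
  obtain ⟨a, rfl⟩ := (mem_span_range_iff_exists_fun k).mp hx
  congr! with i
  simp [map_sum, hc]

theorem finrank_ker_pi_add_card [FiniteDimensional k H] {α : ι → Dual k H}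
    (hα : LinearIndependent k α) :
    finrank k (LinearMap.ker (LinearMap.pi α)) + Fintype.card ι = finrank k H := by
  have hker : LinearMap.ker (LinearMap.pi α) = (span k (Set.range α)).dualCoannihilator := by
    ext x
    change _ ↔ x ∈ ((span k (Set.range α)).dualCoannihilator : Set H)
    rw [coe_dualCoannihilator_span]
    simp [funext_iff]
  rw [hker, ← finrank_span_eq_card hα, add_comm,
    Subspace.finrank_add_finrank_dualCoannihilator_eq]

theorem ker_pi_le_span [FiniteDimensional k H] (A : Matrix ι ι k)
    (hdim : finrank k H + A.rank ≤ 2 * Fintype.card ι)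
    {α : ι → Dual k H} (hα : LinearIndependent k α) {co : ι → H} (hco : LinearIndependent k co)
    (hpair : ∀ i j, α i (co j) = A j i) :
    LinearMap.ker (LinearMap.pi α) ≤ span k (Set.range co) := by
  set Φ := LinearMap.pi α
  set S := span k (Set.range co)
  have hrange : map Φ S = span k (Set.range A.row) := by
    have hrows : Φ ∘ co = A.row := by
      ext i j
      simp [Φ, Matrix.row, hpair]
    rw [map_span, ← Set.range_comp, hrows]
  have hrestrict := LinearMap.finrank_range_add_finrank_ker (Φ.domRestrict S)
  rw [LinearMap.range_domRestrict, hrange, ← Matrix.rank_eq_finrank_span_row,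
    LinearMap.ker_domRestrict, finrank_span_eq_card hco, ← finrank_map_subtype_eq,
    map_comap_subtype] at hrestrict
  have hker : finrank k (LinearMap.ker Φ) + _ = _ := finrank_ker_pi_add_card hα
  have : S ⊓ LinearMap.ker Φ = LinearMap.ker Φ :=
    eq_of_le_of_finrank_le inf_le_right (by omega)
  exact inf_eq_right.mp this

/-- With `c` biorthogonal to `(h_i)`: `(h_j, h_i) = d_j⁻¹ a_ij`, and `⋂ ker c_i` is isotropic. -/
def realizationForm (d : ι → k) (A : Matrix ι ι k) (α c : ι → Dual k H) :
    H →ₗ[k] H →ₗ[k] k :=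
  ∑ i, (d i)⁻¹ • ((c i).smulRight (α i) + (α i).smulRight (c i)) -
    ∑ i, ∑ j, ((d j)⁻¹ * A i j) • (c i).smulRight (c j)

section realizationForm

variable {d : ι → k} {A : Matrix ι ι k} {α c : ι → Dual k H}

theorem realizationForm_apply (x y : H) :
    realizationForm d A α c x y =
      ∑ i, (d i)⁻¹ * (c i x * α i y + α i x * c i y) -
        ∑ i, ∑ j, (d j)⁻¹ * A i j * (c i x * c j y) := by
  simp [realizationForm, LinearMap.sum_apply, mul_assoc, mul_add]

theorem realizationForm_comm (hd : ∀ i, d i ≠ 0) (hsym : ∀ i j, d i * A i j = d j * A j i)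
    (x y : H) : realizationForm d A α c x y = realizationForm d A α c y x := by
  rw [realizationForm_apply, realizationForm_apply, Finset.sum_comm (f := fun i j => _)]
  congr 1
  · exact Finset.sum_congr rfl fun i _ => by ring
  · refine Finset.sum_congr rfl fun i _ => Finset.sum_congr rfl fun j _ => ?_
    rw [inv_mul_comm_of_symmetrizer hd hsym]
    ring

variable [DecidableEq ι] {co : ι → H}

theorem realizationForm_apply_right (hd : ∀ i, d i ≠ 0)
    (hsym : ∀ i j, d i * A i j = d j * A j i)
    (hc : ∀ i j, c i (co j) = if i = j then 1 else 0) (hpair : ∀ i j, α i (co j) = A j i)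
    (x : H) (i : ι) : realizationForm d A α c x (co i) = (d i)⁻¹ * α i x := by
  have hcancel : ∑ j, (d j)⁻¹ * (c j x * A i j) = ∑ j, (d i)⁻¹ * A j i * c j x :=
    Finset.sum_congr rfl fun j _ => by rw [inv_mul_comm_of_symmetrizer hd hsym j i]; ring
  simp only [realizationForm_apply, hpair, hc, mul_ite, mul_one, mul_zero, mul_add,
    Finset.sum_add_distrib, Finset.sum_ite_eq', Finset.mem_univ, if_true, hcancel]
  ring

theorem realizationForm_separatingLeft (hd : ∀ i, d i ≠ 0)
    (hsym : ∀ i j, d i * A i j = d j * A j i) (hα : LinearIndependent k α)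
    (hc : ∀ i j, c i (co j) = if i = j then 1 else 0) (hpair : ∀ i j, α i (co j) = A j i)
    (hspan : LinearMap.ker (LinearMap.pi α) ≤ span k (Set.range co)) :
    (realizationForm d A α c).SeparatingLeft := by
  intro x hx
  have hαx : ∀ i, α i x = 0 := fun i => by
    simpa [realizationForm_apply_right hd hsym hc hpair, hd i] using hx (co i)
  have hxsum : x = ∑ i, c i x • co i :=
    eq_sum_of_mem_span_of_biorthogonal hc (hspan (by ext i; simp [hαx]))
  have hrow : ∀ j, ∑ i, c i x * A i j = 0 := fun j => by
    rw [← hαx j]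
    conv_rhs => rw [hxsum]
    simp [map_sum, hpair]
  have hcomb : ∑ i, ((d i)⁻¹ * c i x) • α i = 0 := by
    ext y
    have hdouble : ∑ i, ∑ j, (d j)⁻¹ * A i j * (c i x * c j y) =
        ∑ j, (d j)⁻¹ * c j y * ∑ i, c i x * A i j := by
      rw [Finset.sum_comm]
      simp only [Finset.mul_sum]
      exact Finset.sum_congr rfl fun j _ => Finset.sum_congr rfl fun i _ => by ring
    have := hx y
    simp only [realizationForm_apply, hdouble, hrow, hαx, mul_zero, zero_mul, add_zero,
      Finset.sum_const_zero, sub_zero] at this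
    simpa [mul_assoc] using this
  have hcx : ∀ i, c i x = 0 := fun i => by
    simpa [hd i] using Fintype.linearIndependent_iff.mp hα _ hcomb i
  rw [hxsum]
  simp [hcx]

end realizationForm

end

theorem statement11_general
    {k : Type*} [Field k]
    (n : ℕ)
    (A : Matrix (Fin n) (Fin n) k)
    (d : Fin n → k) (hd : ∀ i, d i ≠ 0)
    (hsym : ∀ i j, d i * A i j = d j * A j i)
    (H : Type*) [AddCommGroup H] [Module k H] [FiniteDimensional k H]
    (hdim : Module.finrank k H = 2 * n - A.rank)
    (α : Fin n → Module.Dual k H) (hα : LinearIndependent k α)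
    (co : Fin n → H) (hco : LinearIndependent k co)
    (hpair : ∀ i j, α i (co j) = A j i) :
    ∃ B : H →ₗ[k] H →ₗ[k] k,
      (∀ x y : H, B x y = B y x) ∧
      (∀ x : H, (∀ y : H, B x y = 0) → x = 0) ∧
      (∀ (x : H) (i : Fin n), B x (co i) = (d i)⁻¹ * α i x) := by
  obtain ⟨c, hc⟩ := hco.exists_biorthogonal
  have hrank : A.rank ≤ n := by simpa using A.rank_le_card_width
  have hspan := ker_pi_le_span A (by rw [Fintype.card_fin]; omega) hα hco hpair
  exact ⟨realizationForm d A α c, realizationForm_comm hd hsym,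
    realizationForm_separatingLeft hd hsym hα hc hpair hspan,
    realizationForm_apply_right hd hsym hc hpair⟩

theorem statement11
    {k : Type*} [Field k] [CharZero k]
    (n : ℕ) (hn : 0 < n)
    (A : Matrix (Fin n) (Fin n) k)
    (d : Fin n → k) (hd : ∀ i, d i ≠ 0)
    (hsym : ∀ i j, d i * A i j = d j * A j i)
    (H : Type*) [AddCommGroup H] [Module k H] [FiniteDimensional k H]
    (hdim : Module.finrank k H = 2 * n - A.rank)
    (α : Fin n → Module.Dual k H) (hα : LinearIndependent k α)
    (co : Fin n → H) (hco : LinearIndependent k co)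
    (hpair : ∀ i j, α i (co j) = A j i) :
    ∃ B : H →ₗ[k] H →ₗ[k] k,
      (∀ x y : H, B x y = B y x) ∧
      (∀ x : H, (∀ y : H, B x y = 0) → x = 0) ∧
      (∀ (x : H) (i : Fin n), B x (co i) = (d i)⁻¹ * α i x) :=
  statement11_general n A d hd hsym H hdim α hα co hco hpair
end
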